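/- arXiv:1305.4591 — 6 statements merged into one kernel-verified Lean document; each statement's English description precedes it below -/
import Mathlib

section
/- For every c = (c(0), c(1)) ∈ ℂ², the encoded vector satisfies ‖f(c)‖² = 32·(|c(0)|² + |c(1)|²); equivalently, 2^{−5/2}·f is a linear isometry from ℂ² into V₅. -/
open scoped BigOperators

noncomputable section

/-- The 5-qubit state space `V₅ = (Fin 5 → Fin 2) → ℂ ≅ ℂ^32` with the standard
Hermitian inner product. -/
abbrev V5 : Type := EuclideanSpace ℂ (Fin 5 → Fin 2)

/-- The phase exponent `γ(x,y) = x(y₀+y₁+y₂) + y₀y₁ + y₀y₃ + y₁y₄ + y₂y₃ + y₂y₄ + y₃y₄`,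
read modulo 2 via `(-1)^·`. -/
def gam (x : Fin 2) (y : Fin 5 → Fin 2) : ℕ :=
  x.val * ((y 0).val + (y 1).val + (y 2).val)
    + (y 0).val * (y 1).val + (y 0).val * (y 3).val + (y 1).val * (y 4).val
    + (y 2).val * (y 3).val + (y 2).val * (y 4).val + (y 3).val * (y 4).val

/-- The graph-code encoding `f : ℂ² → V₅`, `f(c)(y) = Σ_x (−1)^{γ(x,y)} c(x)`
(normalization factors omitted). -/
def enc (c : Fin 2 → ℂ) : V5 := WithLp.toLp 2 (fun y => ∑ x : Fin 2, (-1 : ℂ) ^ gam x y * c x)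

/-! Factoring out the `x`-independent sign, `f(c)(y) = ±(c(0) + (-1)^{y₀+y₁+y₂} c(1))`, so
`|f(c)(y)|² = |c(0)|² + |c(1)|² + 2 (-1)^{y₀+y₁+y₂} Re(c(0) c̄(1))`. The cross terms cancel in the
sum over `y` because the parity `y₀+y₁+y₂` is balanced: the character sum factors as a product
over the five coordinates, and the factor of `y₀` is `1 + (-1) = 0`. -/

theorem Fintype.sum_neg_one_pow_weighted_sum_eq_zero {R ι : Type*} [CommRing R] [Fintype ι]
    [DecidableEq ι] (w : ι → ℕ) {i₀ : ι} (hi₀ : Odd (w i₀)) :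
    ∑ y : ι → Fin 2, (-1 : R) ^ (∑ i, w i * (y i).val) = 0 := by
  simp_rw [← Finset.prod_pow_eq_pow_sum]
  rw [← Fintype.prod_sum fun i (a : Fin 2) ↦ (-1 : R) ^ (w i * a.val)]
  refine Finset.prod_eq_zero (Finset.mem_univ i₀) ?_
  simp [Fin.sum_univ_two, hi₀.neg_one_pow]

theorem Complex.sum_norm_sq_add_neg_one_pow_mul {Y : Type*} [Fintype Y] (p : Y → ℕ)
    (hp : ∑ y, (-1 : ℂ) ^ p y = 0) (a b : ℂ) :
    ∑ y, ‖a + (-1) ^ p y * b‖ ^ 2 = Fintype.card Y * (‖a‖ ^ 2 + ‖b‖ ^ 2) := by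
  have cross : ∑ y, (a * starRingEnd ℂ ((-1) ^ p y * b)).re = 0 := by
    rw [← Complex.re_sum, ← Finset.mul_sum, ← map_sum, ← Finset.sum_mul, hp]
    simp
  simp only [Complex.sq_norm, Complex.normSq_add, Finset.sum_add_distrib, ← Finset.mul_sum, cross,
    Finset.sum_const, Finset.card_univ, nsmul_eq_mul, Complex.normSq_mul, map_pow,
    Complex.normSq_neg, map_one, one_pow, one_mul, mul_zero, add_zero]
  ring

lemma gam_one (y : Fin 5 → Fin 2) :
    gam 1 y = (y 0).val + (y 1).val + (y 2).val + gam 0 y := by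
  simp only [gam, Fin.val_zero, Fin.val_one, zero_mul, one_mul]
  ring

lemma enc_apply (c : Fin 2 → ℂ) (y : Fin 5 → Fin 2) :
    enc c y = (-1) ^ gam 0 y * (c 0 + (-1) ^ ((y 0).val + (y 1).val + (y 2).val) * c 1) := by
  simp only [enc, PiLp.toLp_apply, Fin.sum_univ_two, gam_one, pow_add]
  ring

/-- The encoded vector satisfies `‖f(c)‖² = 32 (|c(0)|² + |c(1)|²)`;
equivalently `2^{-5/2} f` is a linear isometry from `ℂ²` into `V₅`. -/
theorem enc_norm_sq (c : Fin 2 → ℂ) :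
    ‖enc c‖ ^ 2 = 32 * (‖c 0‖ ^ 2 + ‖c 1‖ ^ 2) := by
  have parity : ∑ y : Fin 5 → Fin 2, (-1 : ℂ) ^ ((y 0).val + (y 1).val + (y 2).val) = 0 := by
    simpa [Fin.sum_univ_five] using
      Fintype.sum_neg_one_pow_weighted_sum_eq_zero (R := ℂ) ![1, 1, 1, 0, 0] (i₀ := 0) odd_one
  rw [EuclideanSpace.norm_sq_eq]
  simp only [enc_apply, norm_mul, norm_pow, norm_neg, norm_one, one_pow, one_mul]
  rw [Complex.sum_norm_sq_add_neg_one_pow_mul _ parity]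
  simp
end
end

section
/- The [[5,1,3]] graph code satisfies the Knill–Laflamme conditions for correcting one arbitrary single-qubit error: for every pair of qubit positions p, q ∈ {1,…,5} and every linear operator E on V₅ that acts as an arbitrary operator on qubits p and q and as the identity on the remaining three qubits, one has ⟨f(e₀), E f(e₁)⟩ = 0 and ⟨f(e₀), E f(e₀)⟩ = ⟨f(e₁), E f(e₁)⟩. (Equivalently, the code spanned by f(e₀), f(e₁) has minimum distance at least 3.) -/
open scoped BigOperators

noncomputable section

/-- `E : V₅ → V₅` acts (at most) on the pair of qubits `p, q` and as the identity on
the remaining qubits: there is a two-qubit operator `A` whose matrix elements give `E`. -/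
def actsOnPair (p q : Fin 5) (E : V5 →ₗ[ℂ] V5) : Prop :=
  ∃ A : (Fin 2 × Fin 2) → (Fin 2 × Fin 2) → ℂ, ∀ (ψ : V5) (y : Fin 5 → Fin 2),
    E ψ y = ∑ a : Fin 2, ∑ b : Fin 2,
      A (y p, y q) (a, b) * ψ (Function.update (Function.update y p a) q b)

/-! Expanding `E` in its two-qubit matrix `A`, every matrix element `⟨f(eₓ), E f(eₓ')⟩` becomes
`∑ A st ab · S`, where `S` is the signed sum of `(-1)^(γ(x,y) + γ(x',y'))` over the eight `y` with
`(y_p, y_q) = st`, and `y'` is `y` with qubits `p, q` reset to `ab`. On the three untouched qubits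
the quadratic parts of the two exponents cancel, so `S` is a character sum of an affine form; the
Knill–Laflamme conditions reduce to `S(0,1) = 0` and `S(0,0) = S(1,1)` for all `p, q, st, ab`,
which is the distance-3 property of the graph and is checked by evaluating the 400 integer sums. -/

open Finset Function

theorem inner_apply_eq_sum_fiberwise {ι κ : Type*} [Fintype ι] [DecidableEq ι] [Fintype κ]
    [DecidableEq κ] (p q : ι) (E : EuclideanSpace ℂ (ι → κ) →ₗ[ℂ] EuclideanSpace ℂ (ι → κ))
    (A : κ × κ → κ × κ → ℂ)
    (hA : ∀ (ψ : EuclideanSpace ℂ (ι → κ)) (y : ι → κ),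
      E ψ y = ∑ a : κ, ∑ b : κ, A (y p, y q) (a, b) * ψ (update (update y p a) q b))
    (ψ φ : EuclideanSpace ℂ (ι → κ)) :
    inner ℂ ψ (E φ) = ∑ st : κ × κ, ∑ ab : κ × κ, A st ab *
      ∑ y ∈ univ.filter (fun y : ι → κ => (y p, y q) = st),
        starRingEnd ℂ (ψ y) * φ (update (update y p ab.1) q ab.2) := by
  calc inner ℂ ψ (E φ)
      = ∑ y : ι → κ, ∑ ab : κ × κ,
          A (y p, y q) ab * (starRingEnd ℂ (ψ y) * φ (update (update y p ab.1) q ab.2)) := by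
        simp only [PiLp.inner_apply, RCLike.inner_apply, hA, Fintype.sum_prod_type, sum_mul]
        refine sum_congr rfl fun y _ => sum_congr rfl fun a _ => sum_congr rfl fun b _ => ?_
        ring
    _ = ∑ st : κ × κ, ∑ y ∈ univ.filter (fun y : ι → κ => (y p, y q) = st), ∑ ab : κ × κ,
          A st ab * (starRingEnd ℂ (ψ y) * φ (update (update y p ab.1) q ab.2)) := by
        rw [← sum_fiberwise univ (fun y : ι → κ => (y p, y q))]
        refine sum_congr rfl fun st _ => sum_congr rfl fun y hy => ?_
        rw [(mem_filter.mp hy).2]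
    _ = _ := by
        simp only [mul_sum]
        exact sum_congr rfl fun st _ => sum_comm

def pairOverlap (p q : Fin 5) (x x' : Fin 2) (st ab : Fin 2 × Fin 2) : ℤ :=
  ∑ y ∈ univ.filter (fun y : Fin 5 → Fin 2 => (y p, y q) = st),
    (-1) ^ gam x y * (-1) ^ gam x' (update (update y p ab.1) q ab.2)

theorem pairOverlap_zero_one (p q : Fin 5) (st ab : Fin 2 × Fin 2) :
    pairOverlap p q 0 1 st ab = 0 := by
  revert p q st ab
  decide

theorem pairOverlap_zero_zero_eq_one_one (p q : Fin 5) (st ab : Fin 2 × Fin 2) :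
    pairOverlap p q 0 0 st ab = pairOverlap p q 1 1 st ab := by
  revert p q st ab
  decide

theorem enc_single_apply (x : Fin 2) (y : Fin 5 → Fin 2) :
    enc (Pi.single x 1) y = (-1) ^ gam x y := by
  simp [enc, Pi.single_apply]

theorem inner_enc_single_apply_enc_single {p q : Fin 5} {E : V5 →ₗ[ℂ] V5}
    {A : Fin 2 × Fin 2 → Fin 2 × Fin 2 → ℂ}
    (hA : ∀ (ψ : V5) (y : Fin 5 → Fin 2),
      E ψ y = ∑ a : Fin 2, ∑ b : Fin 2, A (y p, y q) (a, b) * ψ (update (update y p a) q b))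
    (x x' : Fin 2) :
    inner ℂ (enc (Pi.single x 1)) (E (enc (Pi.single x' 1))) =
      ∑ st : Fin 2 × Fin 2, ∑ ab : Fin 2 × Fin 2, A st ab * pairOverlap p q x x' st ab := by
  rw [inner_apply_eq_sum_fiberwise p q E A hA]
  simp [enc_single_apply, pairOverlap]

/-- The `[[5,1,3]]` graph code satisfies the Knill–Laflamme conditions for correcting one
arbitrary single-qubit error: for every pair of positions `p, q` and every operator `E`
acting only on qubits `p` and `q`, `⟨f(e₀), E f(e₁)⟩ = 0` and
`⟨f(e₀), E f(e₀)⟩ = ⟨f(e₁), E f(e₁)⟩`. -/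
theorem knill_laflamme_513 (p q : Fin 5) (E : V5 →ₗ[ℂ] V5) (hE : actsOnPair p q E) :
    (inner ℂ (enc ![1, 0]) (E (enc ![0, 1])) : ℂ) = 0 ∧
    (inner ℂ (enc ![1, 0]) (E (enc ![1, 0])) : ℂ) =
      (inner ℂ (enc ![0, 1]) (E (enc ![0, 1])) : ℂ) := by
  obtain ⟨A, hA⟩ := hE
  have he₀ : (![1, 0] : Fin 2 → ℂ) = Pi.single 0 1 := by
    ext i; fin_cases i <;> rfl
  have he₁ : (![0, 1] : Fin 2 → ℂ) = Pi.single 1 1 := by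
    ext i; fin_cases i <;> rfl
  simp only [he₀, he₁, inner_enc_single_apply_enc_single hA, pairOverlap_zero_one,
    pairOverlap_zero_zero_eq_one_one]
  simp
end
end

section
/- A phase-flip on qubit 1 of the encoded state produces error syndrome 1000 and leaves the data unchanged: for every c = (c(0), c(1)) ∈ ℂ² there is a nonzero complex scalar α independent of c such that T(S₁(f(c))) = α · |1000⟩ ⊗ (c(0)|0⟩ + c(1)|1⟩). -/
open scoped BigOperators

noncomputable section

/-- The decoding phase exponent `θ`, with `z = (l₀, l₁, l₃, l₄, x̂)`. -/
def theta (y z : Fin 5 → Fin 2) : ℕ :=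
  (z 4).val * ((y 0).val + (y 1).val + (y 2).val)
    + (y 0).val * (y 1).val + (y 0).val * (y 3).val + (y 1).val * (y 4).val
    + (y 2).val * (y 3).val + (y 2).val * (y 4).val + (y 3).val * (y 4).val
    + (y 0).val * (z 0).val + (y 1).val * (z 1).val + (y 3).val * (z 2).val
    + (y 4).val * (z 3).val

/-- The graph decoding operator `T : V₅ → V₅`,
`T|y⟩ = Σ_{l₀l₁l₃l₄, x̂} (−1)^θ |l₀l₁l₃l₄x̂⟩`. -/
def dec (ψ : V5) : V5 := WithLp.toLp 2 (fun z => ∑ y : Fin 5 → Fin 2, (-1 : ℂ) ^ theta y z * ψ y)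

/-- The product state `|s₀s₁s₂s₃⟩ ⊗ (a|0⟩ + b|1⟩)` in `V₅`: four syndrome qubits
followed by one data qubit. -/
def synData (s : Fin 4 → Fin 2) (a b : ℂ) : V5 :=
  WithLp.toLp 2 (fun y => (if y 0 = s 0 ∧ y 1 = s 1 ∧ y 2 = s 2 ∧ y 3 = s 3 then (1 : ℂ) else 0)
    * (if y 4 = 0 then a else b))

/-- Bit-flip (Pauli `σ_X`) on qubit `i` (0-indexed: qubit `j` of the paper is `i = j - 1`). -/
def bitFlip (i : Fin 5) (ψ : V5) : V5 := WithLp.toLp 2 (fun y => ψ (Function.update y i (1 - y i)))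

/-- Phase-flip (Pauli `σ_Z`) on qubit `i` (0-indexed). -/
def phaseFlip (i : Fin 5) (ψ : V5) : V5 := WithLp.toLp 2 (fun y => (-1 : ℂ) ^ (y i).val * ψ y)

/-!
Each amplitude of `T(S₁ f(c))` is `Σₓ (Σ_y (−1)^{θ(y,z) + y₀ + γ(x,y)}) c(x)`. The quadratic part
of `γ` occurs twice in the exponent and cancels mod 2, so the inner sum is a character sum over
`(ℤ/2)⁵`: it is `32` when the character is trivial and `0` otherwise, and the character is
trivial exactly when `z` is the syndrome `1000` followed by the data bit `x̂ = x`.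
-/

section Characters

variable {R : Type*} [CommRing R]

lemma neg_one_pow_add_two_mul (m k : ℕ) : (-1 : R) ^ (m + 2 * k) = (-1) ^ m := by
  rw [pow_add, pow_mul, neg_one_sq, one_pow, mul_one]

lemma one_add_neg_one_pow (k : ℕ) : 1 + (-1 : R) ^ k = if Even k then 2 else 0 := by
  rcases Nat.even_or_odd k with hk | hk
  · rw [hk.neg_one_pow, if_pos hk, one_add_one_eq_two]
  · rw [hk.neg_one_pow, if_neg (Nat.not_even_iff_odd.mpr hk), add_neg_cancel]

lemma sum_fin_two_neg_one_pow_mul_val (k : ℕ) :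
    ∑ t : Fin 2, (-1 : R) ^ (k * t.val) = 1 + (-1) ^ k := by
  simp [Fin.sum_univ_two]

lemma sum_pi_fin_two_prod_neg_one_pow {ι : Type*} [Fintype ι] [DecidableEq ι] (a : ι → ℕ) :
    ∑ y : ι → Fin 2, ∏ i, (-1 : R) ^ (a i * (y i).val)
      = if ∀ i, Even (a i) then 2 ^ Fintype.card ι else 0 := by
  rw [← Fintype.prod_sum fun i (t : Fin 2) => (-1 : R) ^ (a i * t.val)]
  simp only [sum_fin_two_neg_one_pow_mul_val, one_add_neg_one_pow, Fintype.prod_ite_zero,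
    Finset.prod_const, Finset.card_univ]

end Characters

/-- The coefficients `a` with `θ(y,z) + y₀ + γ(x,y) ≡ Σᵢ aᵢ yᵢ (mod 2)`. -/
def syndromeExponent (z : Fin 5 → Fin 2) (x : Fin 2) : Fin 5 → ℕ :=
  ![(z 4).val + x.val + (z 0).val + 1, (z 4).val + x.val + (z 1).val, (z 4).val + x.val,
    (z 2).val, (z 3).val]

lemma neg_one_pow_theta_mul_phase_mul_gam (y z : Fin 5 → Fin 2) (x : Fin 2) :
    (-1 : ℂ) ^ theta y z * ((-1) ^ (y 0).val * (-1) ^ gam x y)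
      = ∏ i, (-1) ^ (syndromeExponent z x i * (y i).val) := by
  have hquad : theta y z + (y 0).val + gam x y
      = ∑ i, syndromeExponent z x i * (y i).val
        + 2 * ((y 0).val * (y 1).val + (y 0).val * (y 3).val + (y 1).val * (y 4).val
          + (y 2).val * (y 3).val + (y 2).val * (y 4).val + (y 3).val * (y 4).val) := by
    simp only [theta, gam, syndromeExponent, Fin.sum_univ_five, Matrix.cons_val_zero,
      Matrix.cons_val_one, Matrix.cons_val]
    ring
  rw [← pow_add, ← pow_add, ← add_assoc, hquad, neg_one_pow_add_two_mul,
    Finset.prod_pow_eq_pow_sum]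

lemma dec_phaseFlip_enc_apply (c : Fin 2 → ℂ) (z : Fin 5 → Fin 2) :
    dec (phaseFlip 0 (enc c)) z
      = ∑ x, (∑ y : Fin 5 → Fin 2, ∏ i, (-1 : ℂ) ^ (syndromeExponent z x i * (y i).val)) * c x := by
  simp only [dec, phaseFlip, enc, WithLp.ofLp_toLp, Finset.mul_sum, Finset.sum_mul]
  rw [Finset.sum_comm]
  simp only [← neg_one_pow_theta_mul_phase_mul_gam, mul_assoc]

lemma forall_even_syndromeExponent_iff (z : Fin 5 → Fin 2) (x : Fin 2) :
    (∀ i, Even (syndromeExponent z x i))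
      ↔ (z 0 = 1 ∧ z 1 = 0 ∧ z 2 = 0 ∧ z 3 = 0) ∧ z 4 = x := by
  revert z x
  decide

lemma synData_apply (s : Fin 4 → Fin 2) (c : Fin 2 → ℂ) (z : Fin 5 → Fin 2) :
    synData s (c 0) (c 1) z
      = if z 0 = s 0 ∧ z 1 = s 1 ∧ z 2 = s 2 ∧ z 3 = s 3 then c (z 4) else 0 := by
  have hdata : (if z 4 = 0 then c 0 else c 1) = c (z 4) := by
    rcases Fin.exists_fin_two.mp ⟨z 4, rfl⟩ with h | h <;> simp [h]
  simp only [synData, WithLp.ofLp_toLp, ite_mul, one_mul, zero_mul, hdata]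

/-- A phase-flip on qubit 1 produces syndrome `1000` and leaves the data unchanged: `T(S₁ f(c)) = α |1000⟩ ⊗ (c(0)|0⟩ + c(1)|1⟩)` with `α ≠ 0` independent of `c`. -/
theorem phase_flip_qubit1_syndrome :
    ∃ α : ℂ, α ≠ 0 ∧ ∀ c : Fin 2 → ℂ,
      dec (phaseFlip 0 (enc c)) = α • synData ![1, 0, 0, 0] (c 0) (c 1) := by
  refine ⟨32, by norm_num, fun c => ?_⟩
  ext z
  simp only [dec_phaseFlip_enc_apply, sum_pi_fin_two_prod_neg_one_pow,
    forall_even_syndromeExponent_iff, PiLp.smul_apply, synData_apply, smul_eq_mul]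
  by_cases hA : z 0 = 1 ∧ z 1 = 0 ∧ z 2 = 0 ∧ z 3 = 0
  · simp [hA, show (2 : ℂ) ^ 5 = 32 by norm_num]
  · simp [hA]
end
end

section
/- A phase-flip on qubit 2 of the encoded state produces error syndrome 0100 and leaves the data unchanged: for every c = (c(0), c(1)) ∈ ℂ² there is a nonzero complex scalar α independent of c such that T(S₂(f(c))) = α · |0100⟩ ⊗ (c(0)|0⟩ + c(1)|1⟩). -/
open scoped BigOperators

noncomputable section

/-!
In the amplitude of `|z⟩` in `T(S₂ f(c))`, the phases `(-1)^θ(y,z)`, `(-1)^γ(x,y)` and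
`(-1)^{y₁}` multiply to a character `y ↦ (-1)^{w(x,z)⬝y}` of `(ℤ/2)⁵`: the graph quadratic form
occurs in both `θ` and `γ` and cancels. Summing a character over `(ℤ/2)⁵` gives `32` if it is
trivial and `0` otherwise, and `w(x,z)` vanishes mod 2 exactly when `z₀z₁z₂z₃ = 0100` and
`x = z₄`.
-/

section CharacterSum

variable {R : Type*}

theorem sum_fin_two_neg_one_pow_mul [Ring R] (k : ℕ) :
    ∑ b : Fin 2, (-1 : R) ^ (k * b.val) = if Even k then 2 else 0 := by
  rcases Nat.even_or_odd k with hk | hk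
  · simp [hk]
  · simp [hk.neg_one_pow, Nat.not_even_iff_odd.mpr hk]

theorem sum_neg_one_pow_sum_mul [CommRing R] {n : ℕ} (w : Fin n → ℕ) :
    ∑ y : Fin n → Fin 2, (-1 : R) ^ (∑ i, w i * (y i).val)
      = if ∀ i, Even (w i) then 2 ^ n else 0 := by
  calc ∑ y : Fin n → Fin 2, (-1 : R) ^ (∑ i, w i * (y i).val)
      = ∑ y : Fin n → Fin 2, ∏ i, (-1 : R) ^ (w i * (y i).val) := by
        simp only [Finset.prod_pow_eq_pow_sum]
    _ = ∏ i, ∑ b : Fin 2, (-1 : R) ^ (w i * b.val) :=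
        (Fintype.prod_sum fun i (b : Fin 2) => (-1 : R) ^ (w i * b.val)).symm
    _ = if ∀ i, Even (w i) then 2 ^ n else 0 := by
        simp only [sum_fin_two_neg_one_pow_mul, Fintype.prod_ite_zero, Finset.prod_const,
          Finset.card_univ, Fintype.card_fin]

end CharacterSum

def phaseFlipOneDecodingWeight (x : Fin 2) (z : Fin 5 → Fin 2) : Fin 5 → ℕ :=
  ![(z 4).val + x.val + (z 0).val, (z 4).val + x.val + (z 1).val + 1, (z 4).val + x.val,
    (z 2).val, (z 3).val]

theorem theta_add_gam_add_val_one (x : Fin 2) (y z : Fin 5 → Fin 2) :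
    theta y z + gam x y + (y 1).val
      = ∑ i, phaseFlipOneDecodingWeight x z i * (y i).val + 2 * gam 0 y := by
  simp only [theta, gam, phaseFlipOneDecodingWeight, Fin.sum_univ_five, Matrix.cons_val,
    Fin.val_zero]
  ring

theorem even_phaseFlipOneDecodingWeight_iff (x : Fin 2) (z : Fin 5 → Fin 2) :
    (∀ i, Even (phaseFlipOneDecodingWeight x z i))
      ↔ (z 0 = 0 ∧ z 1 = 1 ∧ z 2 = 0 ∧ z 3 = 0) ∧ x = z 4 := by
  revert x z
  decide

theorem dec_phaseFlip_one_enc_apply (c : Fin 2 → ℂ) (z : Fin 5 → Fin 2) :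
    dec (phaseFlip 1 (enc c)) z
      = ∑ x, c x * ∑ y : Fin 5 → Fin 2,
          (-1 : ℂ) ^ (∑ i, phaseFlipOneDecodingWeight x z i * (y i).val) := by
  have sign_eq (x : Fin 2) (y : Fin 5 → Fin 2) :
      (-1 : ℂ) ^ theta y z * ((-1) ^ (y 1).val * (-1) ^ gam x y)
        = (-1) ^ (∑ i, phaseFlipOneDecodingWeight x z i * (y i).val) := by
    rw [← pow_add, ← pow_add, add_comm (y 1).val, ← add_assoc, theta_add_gam_add_val_one,
      pow_add, pow_mul, neg_one_sq, one_pow, mul_one]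
  simp only [dec, phaseFlip, enc, PiLp.toLp_apply, Finset.mul_sum, ← sign_eq]
  rw [Finset.sum_comm]
  refine Finset.sum_congr rfl fun x _ => Finset.sum_congr rfl fun y _ => ?_
  ring

/-- A phase-flip on qubit 2 produces syndrome `0100` and leaves the data unchanged: `T(S₂ f(c)) = α |0100⟩ ⊗ (c(0)|0⟩ + c(1)|1⟩)` with `α ≠ 0` independent of `c`. -/
theorem phase_flip_qubit2_syndrome :
    ∃ α : ℂ, α ≠ 0 ∧ ∀ c : Fin 2 → ℂ,
      dec (phaseFlip 1 (enc c)) = α • synData ![0, 1, 0, 0] (c 0) (c 1) := by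
  refine ⟨32, by norm_num, fun c => ?_⟩
  ext z
  simp only [dec_phaseFlip_one_enc_apply, sum_neg_one_pow_sum_mul,
    even_phaseFlipOneDecodingWeight_iff, synData, PiLp.smul_apply, smul_eq_mul]
  by_cases hs : z 0 = 0 ∧ z 1 = 1 ∧ z 2 = 0 ∧ z 3 = 0
  · rcases (by omega : z 4 = 0 ∨ z 4 = 1) with hz | hz <;> simp [hs, hz] <;> ring
  · simp [hs]
end
end

section
/- A phase-flip on qubit 5 of the encoded state produces error syndrome 0001 and leaves the data unchanged: for every c = (c(0), c(1)) ∈ ℂ² there is a nonzero complex scalar α independent of c such that T(S₅(f(c))) = α · |0001⟩ ⊗ (c(0)|0⟩ + c(1)|1⟩). -/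
open scoped BigOperators

noncomputable section

/-!
Expanding, the amplitude of `T S₅ f(c)` at `|z⟩` is `∑ₓ c(x) ∑_y (-1)^(θ(y,z) + y₄ + γ(x,y))`.
The quadratic parts of `θ` and `γ` agree, so modulo 2 the exponent is a linear form `⟨y, w(x,z)⟩`
and the inner sum is a Walsh–Hadamard character sum: it is `2⁵` if `w(x,z) ≡ 0` and `0` otherwise.
Now `w(x,z) ≡ 0` says exactly that `x = z₄` and `z₀z₁z₂z₃ = 0001`, so only `c(z₄)` survives.
-/

theorem sum_neg_one_pow_dotProduct {ι R : Type*} [Fintype ι] [DecidableEq ι] [CommRing R]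
    (w : ι → ℕ) :
    ∑ y : ι → Fin 2, (-1 : R) ^ (∑ i, (y i).val * w i) = ∏ i, (1 + (-1 : R) ^ w i) := by
  calc ∑ y : ι → Fin 2, (-1 : R) ^ (∑ i, (y i).val * w i)
      = ∑ y : ι → Fin 2, ∏ i, (-1 : R) ^ ((y i).val * w i) := by
        simp only [Finset.prod_pow_eq_pow_sum]
    _ = ∏ i, ∑ b : Fin 2, (-1 : R) ^ (b.val * w i) :=
        (Fintype.prod_sum fun i (b : Fin 2) => (-1 : R) ^ (b.val * w i)).symm
    _ = ∏ i, (1 + (-1 : R) ^ w i) := by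
        simp only [Fin.sum_univ_two, Fin.val_zero, Fin.val_one, zero_mul, one_mul, pow_zero]

theorem prod_one_add_neg_one_pow {ι R : Type*} [Fintype ι] [CommRing R] (w : ι → ℕ) :
    ∏ i, (1 + (-1 : R) ^ w i) = if ∀ i, Even (w i) then 2 ^ Fintype.card ι else 0 := by
  split_ifs with h
  · rw [Fintype.card_eq_sum_ones, ← Finset.prod_pow_eq_pow_sum]
    refine Finset.prod_congr rfl fun i _ => ?_
    rw [(h i).neg_one_pow, pow_one, one_add_one_eq_two]
  · push Not at h
    obtain ⟨i, hi⟩ := h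
    refine Finset.prod_eq_zero (Finset.mem_univ i) ?_
    rw [(Nat.not_even_iff_odd.mp hi).neg_one_pow, add_neg_cancel]

/-- The vector `w(x,z)`: the coefficients of the linear part of `θ(y,z) + y₄ + γ(x,y)` in `y`. -/
def syndromeFreq (x : Fin 2) (z : Fin 5 → Fin 2) : Fin 5 → ℕ :=
  ![(z 4).val + x.val + (z 0).val, (z 4).val + x.val + (z 1).val, (z 4).val + x.val,
    (z 2).val, (z 3).val + 1]

theorem neg_one_pow_theta_mul_phase_gam (x : Fin 2) (y z : Fin 5 → Fin 2) :
    (-1 : ℂ) ^ theta y z * ((-1) ^ (y 4).val * (-1) ^ gam x y)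
      = (-1) ^ (∑ i, (y i).val * syndromeFreq x z i) := by
  have hsplit : theta y z + ((y 4).val + gam x y) = ∑ i, (y i).val * syndromeFreq x z i
      + 2 * ((y 0).val * (y 1).val + (y 0).val * (y 3).val + (y 1).val * (y 4).val
        + (y 2).val * (y 3).val + (y 2).val * (y 4).val + (y 3).val * (y 4).val) := by
    simp only [theta, gam, syndromeFreq, Fin.sum_univ_five, Matrix.cons_val]
    ring
  rw [← pow_add, ← pow_add, hsplit, pow_add, pow_mul, neg_one_sq, one_pow, mul_one]

theorem forall_even_syndromeFreq_iff (x : Fin 2) (z : Fin 5 → Fin 2) :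
    (∀ i, Even (syndromeFreq x z i)) ↔ x = z 4 ∧ z 0 = 0 ∧ z 1 = 0 ∧ z 2 = 0 ∧ z 3 = 1 := by
  revert x z
  decide

theorem dec_phaseFlip_enc_apply_s9 (c : Fin 2 → ℂ) (z : Fin 5 → Fin 2) :
    dec (phaseFlip 4 (enc c)) z
      = if z 0 = 0 ∧ z 1 = 0 ∧ z 2 = 0 ∧ z 3 = 1 then 32 * c (z 4) else 0 := by
  have hchar (x : Fin 2) : ∑ y : Fin 5 → Fin 2, (-1 : ℂ) ^ (∑ i, (y i).val * syndromeFreq x z i)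
      = if x = z 4 then if z 0 = 0 ∧ z 1 = 0 ∧ z 2 = 0 ∧ z 3 = 1 then 32 else 0 else 0 := by
    simp only [sum_neg_one_pow_dotProduct, prod_one_add_neg_one_pow, forall_even_syndromeFreq_iff,
      ite_and, Fintype.card_fin]
    norm_num
  calc dec (phaseFlip 4 (enc c)) z
      = ∑ x, c x * ∑ y : Fin 5 → Fin 2, (-1 : ℂ) ^ (∑ i, (y i).val * syndromeFreq x z i) := by
        simp only [dec, phaseFlip, enc, WithLp.ofLp_toLp, Finset.mul_sum]
        rw [Finset.sum_comm]
        simp only [← neg_one_pow_theta_mul_phase_gam]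
        ring_nf
    _ = _ := by
        simp only [hchar, mul_ite, mul_zero, Finset.sum_ite_eq', Finset.mem_univ, if_true]
        split_ifs <;> ring

/-- A phase-flip on qubit 5 produces syndrome `0001` and leaves the data unchanged: `T(S₅ f(c)) = α |0001⟩ ⊗ (c(0)|0⟩ + c(1)|1⟩)` with `α ≠ 0` independent of `c`. -/
theorem phase_flip_qubit5_syndrome :
    ∃ α : ℂ, α ≠ 0 ∧ ∀ c : Fin 2 → ℂ,
      dec (phaseFlip 4 (enc c)) = α • synData ![0, 0, 0, 1] (c 0) (c 1) := by
  refine ⟨32, by norm_num, fun c => ?_⟩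
  ext z
  have hdata : c (z 4) = if z 4 = 0 then c 0 else c 1 := by
    rcases Fin.exists_fin_two.mp ⟨z 4, rfl⟩ with h | h <;> simp [h]
  rw [dec_phaseFlip_enc_apply_s9, PiLp.smul_apply, smul_eq_mul, hdata]
  simp only [synData, WithLp.ofLp_toLp, Matrix.cons_val]
  by_cases hsyn : z 0 = 0 ∧ z 1 = 0 ∧ z 2 = 0 ∧ z 3 = 1 <;> simp [hsyn]
end
end

section
/- A combined bit-and-phase flip on qubit 1 of the encoded state produces error syndrome 1110: for every c = (c(0), c(1)) ∈ ℂ² there is a nonzero complex scalar α independent of c such that T(BS₁(f(c))) = α · |1110⟩ ⊗ (−c(0)|0⟩ + c(1)|1⟩). -/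
open scoped BigOperators

noncomputable section

/-! Flipping `y₀` changes the graph form `y₀y₁ + y₀y₃ + …` by `y₁ + y₃` and the data term
`x(y₀ + y₁ + y₂)` by `x`, so in the phase `θ(y,z) + y₀ + γ(x, y')` of `T ∘ BS₁ ∘ f` the quadratic
part appears twice and cancels mod 2: what is left is `x` plus a linear form in `y` with
coefficients depending on `z` and `x`. Summing `(-1)^(linear form)` over `y ∈ 𝔽₂⁵` gives `32` if all
coefficients are even and `0` otherwise, and they are all even exactly when `z = (1,1,1,0,x)`.
Hence `T(BS₁ f(c)) = 32 (c₀ |11100⟩ - c₁ |11101⟩)`. -/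

theorem sum_prod_neg_one_pow_mul_val {R ι : Type*} [CommRing R] [Fintype ι] [DecidableEq ι]
    (a : ι → ℕ) :
    ∑ y : ι → Fin 2, ∏ i, (-1 : R) ^ (a i * (y i).val) =
      if ∀ i, Even (a i) then 2 ^ Fintype.card ι else 0 := by
  have h : ∀ k : ℕ, ∑ b : Fin 2, (-1 : R) ^ (k * b.val) = if Even k then 2 else 0 := by
    intro k
    rcases Nat.even_or_odd k with hk | hk
    · simp [Fin.sum_univ_two, hk.neg_one_pow, if_pos hk, one_add_one_eq_two]
    · simp [Fin.sum_univ_two, hk.neg_one_pow, Nat.not_even_iff_odd.mpr hk]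
  rw [← Fintype.prod_sum (fun i (b : Fin 2) => (-1 : R) ^ (a i * b.val)),
    Finset.prod_congr rfl fun i _ => h (a i), Finset.prod_ite_zero]
  simp

def flipWeight (x : Fin 2) (z : Fin 5 → Fin 2) : Fin 5 → ℕ :=
  ![(z 4).val + (z 0).val + 1 + x.val, (z 4).val + (z 1).val + 1 + x.val, (z 4).val + x.val,
    (z 2).val + 1, (z 3).val]

theorem theta_add_gam_flip_mod_two (x : Fin 2) (y z : Fin 5 → Fin 2) :
    (theta y z + (y 0).val + gam x (Function.update y 0 (1 - y 0))) % 2 =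
      (x.val + ∑ i, flipWeight x z i * (y i).val) % 2 := by
  revert x y z; decide

theorem neg_one_pow_theta_add_gam_flip (x : Fin 2) (y z : Fin 5 → Fin 2) :
    (-1 : ℂ) ^ (theta y z + (y 0).val + gam x (Function.update y 0 (1 - y 0))) =
      (-1) ^ x.val * ∏ i, (-1 : ℂ) ^ (flipWeight x z i * (y i).val) := by
  rw [Finset.prod_pow_eq_pow_sum, ← pow_add, neg_one_pow_eq_pow_mod_two,
    theta_add_gam_flip_mod_two, ← neg_one_pow_eq_pow_mod_two]

theorem dec_phaseFlip_bitFlip_enc_apply (c : Fin 2 → ℂ) (z : Fin 5 → Fin 2) :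
    dec (phaseFlip 0 (bitFlip 0 (enc c))) z =
      ∑ x, (-1) ^ x.val * c x * if ∀ i, Even (flipWeight x z i) then 32 else 0 := by
  simp only [dec, phaseFlip, bitFlip, enc, PiLp.toLp_apply, Finset.mul_sum]
  rw [Finset.sum_comm]
  refine Finset.sum_congr rfl fun x _ => ?_
  simp_rw [← mul_assoc, ← pow_add, neg_one_pow_theta_add_gam_flip, mul_comm _ (c x), mul_assoc,
    ← Finset.mul_sum, sum_prod_neg_one_pow_mul_val]
  norm_num

theorem flipWeight_even_iff (x : Fin 2) (z : Fin 5 → Fin 2) :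
    (∀ i, Even (flipWeight x z i)) ↔ (z 0 = 1 ∧ z 1 = 1 ∧ z 2 = 1 ∧ z 3 = 0) ∧ z 4 = x := by
  revert x z; decide

/-- A combined bit-and-phase flip `BS₁ = S₁ ∘ B₁` on qubit 1 produces syndrome `1110`: `T(BS₁ f(c)) = α |1110⟩ ⊗ (−c(0)|0⟩ + c(1)|1⟩)` with `α ≠ 0` independent of `c`. -/
theorem bit_phase_flip_qubit1_syndrome :
    ∃ α : ℂ, α ≠ 0 ∧ ∀ c : Fin 2 → ℂ,
      dec (phaseFlip 0 (bitFlip 0 (enc c))) = α • synData ![1, 1, 1, 0] (-(c 0)) (c 1) := by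
  refine ⟨-32, by norm_num, fun c => ?_⟩
  ext z
  simp only [dec_phaseFlip_bitFlip_enc_apply, flipWeight_even_iff, Fin.sum_univ_two, synData,
    PiLp.smul_apply, smul_eq_mul]
  by_cases hs : z 0 = 1 ∧ z 1 = 1 ∧ z 2 = 1 ∧ z 3 = 0
  · obtain h4 | h4 : z 4 = 0 ∨ z 4 = 1 := by omega
    all_goals simp [hs, h4, mul_comm]
  · simp [hs]
end
end
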